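/- Commutator of stretching and transport is of zeroth order (explicit formula from the proof of Lemma 2.2): For all smooth vector fields ξ, g : ℝ³ → ℝ³, every x ∈ ℝ³ and every l ∈ {1,2,3}, the l-th component satisfies (𝓣_ξ(𝓛_ξ g) − 𝓛_ξ(𝓣_ξ g))^l(x) = − Σ_{j=1}^{3} Σ_{k=1}^{3} ξ^j(x) g^k(x) ∂_j∂_l ξ^k(x). -/

import Mathlib

open MeasureTheory

noncomputable section

/-- Points of ℝ³ (as `Fin 3 → ℝ`). -/
abbrev V3 := Fin 3 → ℝ
/-- Vector fields on ℝ³. -/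
abbrev VF := V3 → V3

/-- Smoothness of a vector field. -/
def SmoothVF (f : VF) : Prop := ContDiff ℝ (⊤ : ℕ∞) f

/-- Smoothness of a scalar function. -/
def SmoothS (p : V3 → ℝ) : Prop := ContDiff ℝ (⊤ : ℕ∞) p

/-- The periodicity cell [0,1)³. -/
def cube : Set V3 := Set.univ.pi fun _ => Set.Ico (0:ℝ) 1

/-- Partial derivative in the j-th coordinate, acting componentwise. -/
def pd (j : Fin 3) (f : VF) : VF := fun x => fderiv ℝ f x (Pi.single j 1)

/-- Iterated derivative D^α = ∂₁^{α₁}∂₂^{α₂}∂₃^{α₃} for a multi-index α = (α₁, α₂, α₃). -/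
def Dm (α : ℕ × ℕ × ℕ) (f : VF) : VF :=
  (pd 0)^[α.1] ((pd 1)^[α.2.1] ((pd 2)^[α.2.2] f))

/-- The order |α| of a multi-index. -/
def mdeg (α : ℕ × ℕ × ℕ) : ℕ := α.1 + α.2.1 + α.2.2

/-- ℤ³-periodicity of a vector field. -/
def Periodic3 (f : VF) : Prop :=
  ∀ (x : V3) (k : Fin 3 → ℤ), f (x + fun i => (k i : ℝ)) = f x

/-- ℤ³-periodicity of a scalar function. -/
def PeriodicS (p : V3 → ℝ) : Prop :=
  ∀ (x : V3) (k : Fin 3 → ℤ), p (x + fun i => (k i : ℝ)) = p x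

/-- Divergence-free: Σ_j ∂_j f^j ≡ 0. -/
def DivFree (f : VF) : Prop := ∀ x, ∑ j, pd j f x j = 0

/-- Mean-zero over the periodicity cell. -/
def MeanZero (f : VF) : Prop := (∫ x in cube, f x) = 0

/-- The L² inner product over the periodicity cell. -/
def L2inner (f g : VF) : ℝ := ∫ x in cube, ∑ i, f x i * g x i

/-- The finite set of multi-indices of order at most m. -/
def midx (m : ℕ) : Finset (ℕ × ℕ × ℕ) :=
  (Finset.range (m+1) ×ˢ Finset.range (m+1) ×ˢ Finset.range (m+1)).filter
    fun α => mdeg α ≤ m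

lemma midx_nonempty (m : ℕ) : (midx m).Nonempty :=
  ⟨(0,0,0), Finset.mem_filter.mpr ⟨Finset.mem_product.mpr ⟨Finset.mem_range.mpr (Nat.succ_pos m),
    Finset.mem_product.mpr ⟨Finset.mem_range.mpr (Nat.succ_pos m), Finset.mem_range.mpr (Nat.succ_pos m)⟩⟩,
    Nat.zero_le m⟩⟩

/-- The W^{m,2} inner product ⟨f,g⟩_{W^{m,2}} = Σ_{|α|≤m} ⟨D^α f, D^α g⟩_{L²}. -/
def sobInner (m : ℕ) (f g : VF) : ℝ := ∑ α ∈ midx m, L2inner (Dm α f) (Dm α g)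

/-- The squared W^{m,2} norm. -/
def sobNormSq (m : ℕ) (f : VF) : ℝ := sobInner m f f

/-- The W^{k,∞} norm: max over |α| ≤ k of sup_x |D^α ξ(x)|. -/
def WinfNorm (k : ℕ) (ξ : VF) : ℝ :=
  (midx k).sup' (midx_nonempty k) fun α => ⨆ x, ‖Dm α ξ x‖

/-- The transport operator 𝓛_ξ f = Σ_j ξ^j ∂_j f. -/
def transport (ξ f : VF) : VF := fun x => ∑ j, ξ x j • pd j f x

/-- The stretching operator 𝓣_ξ f, with l-th component Σ_j f^j ∂_l ξ^j. -/
def stretch (ξ f : VF) : VF := fun x l => ∑ j, f x j * pd l ξ x j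

/-- The L²-adjoint 𝓣*_ξ g, with j-th component Σ_l g^l ∂_l ξ^j. -/
def stretchStar (ξ g : VF) : VF := fun x j => ∑ l, g x l * pd l ξ x j

/-- The transport–stretching operator B_ξ = 𝓛_ξ + 𝓣_ξ. -/
def Bop (ξ f : VF) : VF := fun x => transport ξ f x + stretch ξ f x

/-- The gradient of a scalar function. -/
def grad (p : V3 → ℝ) : VF := fun x i => fderiv ℝ p x (Pi.single i 1)

/-- `IsLeray u g` : g is the Leray projection 𝒫u of u, i.e. g is a ℤ³-periodic smooth
divergence-free mean-zero field and u − g = ∇p + c for some ℤ³-periodic smooth scalar p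
and constant vector c. -/
def IsLeray (u g : VF) : Prop :=
  Periodic3 g ∧ SmoothVF g ∧ DivFree g ∧ MeanZero g ∧
  ∃ (p : V3 → ℝ) (c : V3), PeriodicS p ∧ SmoothS p ∧
    ∀ x, u x - g x = grad p x + c

/-- The componentwise Laplacian. -/
def lap (f : VF) : VF := fun x => ∑ j, pd j (pd j f) x

/-- The Stokes inner product ⟨u,v⟩_{A^{m/2}}. -/
def stokesInner (m : ℕ) (u v : VF) : ℝ :=
  if m % 2 = 0 then L2inner (lap^[m/2] u) (lap^[m/2] v)
  else ∑ j : Fin 3, L2inner (pd j (lap^[m/2] u)) (pd j (lap^[m/2] v))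

/-- A ℤ³-periodic smooth divergence-free mean-zero vector field. -/
def GoodField (f : VF) : Prop :=
  Periodic3 f ∧ SmoothVF f ∧ DivFree f ∧ MeanZero f

/-! By the Leibniz rule, `∂_j (Σ_k g^k ∂_l ξ^k)` splits into the terms where `∂_j` falls on `g`,
which make up exactly `𝓣_ξ (𝓛_ξ g)` after contracting with `ξ^j`, and the terms where it falls
on `∂_l ξ`, which survive in the commutator. -/

open Finset

section PartialDerivatives

variable {f h : VF} {x : V3}

lemma pd_apply_eq_fderiv (hf : DifferentiableAt ℝ f x) (j l : Fin 3) :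
    pd j f x l = fderiv ℝ (fun y => f y l) x (Pi.single j 1) := by
  rw [fderiv_apply hf]
  rfl

lemma contDiff_pd {n : WithTop ℕ∞} (hf : ContDiff ℝ (n + 1) f) (j : Fin 3) :
    ContDiff ℝ n (pd j f) :=
  (hf.fderiv_right le_rfl).clm_apply contDiff_const

lemma fderiv_dot_apply (hf : DifferentiableAt ℝ f x) (hh : DifferentiableAt ℝ h x) (j : Fin 3) :
    fderiv ℝ (fun y => ∑ k, f y k * h y k) x (Pi.single j 1) =
      ∑ k, (pd j f x k * h x k + f x k * pd j h x k) := by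
  have hfk (k : Fin 3) : DifferentiableAt ℝ (fun y => f y k) x := differentiableAt_pi.mp hf k
  have hhk (k : Fin 3) : DifferentiableAt ℝ (fun y => h y k) x := differentiableAt_pi.mp hh k
  rw [fderiv_fun_sum fun k _ => (hfk k).fun_mul (hhk k), _root_.sum_apply]
  refine sum_congr rfl fun k _ => ?_
  rw [fderiv_fun_mul (hfk k) (hhk k), pd_apply_eq_fderiv hf, pd_apply_eq_fderiv hh]
  simp only [add_apply, smul_apply, smul_eq_mul]
  ring

end PartialDerivatives

section Commutator

variable {ξ g : VF} {x : V3}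

lemma differentiableAt_stretch (hξ : ∀ i, DifferentiableAt ℝ (pd i ξ) x)
    (hg : DifferentiableAt ℝ g x) : DifferentiableAt ℝ (stretch ξ g) x :=
  differentiableAt_pi.mpr fun i => DifferentiableAt.fun_sum fun k _ =>
    (differentiableAt_pi.mp hg k).mul (differentiableAt_pi.mp (hξ i) k)

lemma pd_stretch_apply (hξ : ∀ i, DifferentiableAt ℝ (pd i ξ) x)
    (hg : DifferentiableAt ℝ g x) (j l : Fin 3) :
    pd j (stretch ξ g) x l = ∑ k, (pd j g x k * pd l ξ x k + g x k * pd j (pd l ξ) x k) := by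
  rw [pd_apply_eq_fderiv (differentiableAt_stretch hξ hg)]
  exact fderiv_dot_apply hg (hξ l) j

lemma stretch_transport_apply (ξ g : VF) (x : V3) (l : Fin 3) :
    stretch ξ (transport ξ g) x l = ∑ j, ∑ k, ξ x j * pd j g x k * pd l ξ x k := by
  simp only [stretch, transport, Finset.sum_apply, Pi.smul_apply, smul_eq_mul, sum_mul]
  exact sum_comm

lemma transport_stretch_apply (hξ : ∀ i, DifferentiableAt ℝ (pd i ξ) x)
    (hg : DifferentiableAt ℝ g x) (l : Fin 3) :
    transport ξ (stretch ξ g) x l =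
      ∑ j, ξ x j * ∑ k, (pd j g x k * pd l ξ x k + g x k * pd j (pd l ξ) x k) := by
  simp only [transport, Finset.sum_apply, Pi.smul_apply, smul_eq_mul, pd_stretch_apply hξ hg]

end Commutator

/-- The commutator of stretching and transport is of zeroth order: explicit formula. -/
theorem stmt11 (ξ g : VF) (hξ : SmoothVF ξ) (hg : SmoothVF g) (x : V3) (l : Fin 3) :
    stretch ξ (transport ξ g) x l - transport ξ (stretch ξ g) x l =
      -∑ j : Fin 3, ∑ k : Fin 3, ξ x j * g x k * pd j (pd l ξ) x k := by
  have hξ' (i : Fin 3) : DifferentiableAt ℝ (pd i ξ) x :=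
    (contDiff_pd (n := 1) (hξ.of_le (by norm_cast)) i).differentiable one_ne_zero x
  rw [stretch_transport_apply, transport_stretch_apply hξ' (hg.differentiable (by simp) x)]
  simp only [mul_sum, mul_add, sum_add_distrib, ← mul_assoc]
  exact sub_add_cancel_left _ _
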